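/- Let A and B be commutative unital complex Banach algebras and let f : A → B be a continuous injective unital algebra homomorphism such that B is an integral extension of f(A), i.e., every element b ∈ B is a root of some monic polynomial with coefficients in the image f(A). If the set of invertible elements of A is dense in A, then the set of invertible elements of B is dense in B. -/

import Mathlib

/-! Where `P'(x)` is invertible, the inverse function theorem makes `y ↦ P(y)` map neighbourhoods
of `x` onto neighbourhoods of `P(x)`, so the preimage of the dense set of units accumulates at
`x`. If the leading coefficient of `P` is a unit then so is that of `P'` (integers are invertible
in a `ℂ`-algebra), and induction on the degree shows that `P(x)` is invertible for a dense set of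
`x`. Now let `b ∈ B` be a root of a monic `p` and pick `d ∈ A` near `0` with `p(d)` invertible:
`b - f(d)` divides `p(b) - p(f(d)) = -f(p(d))`, so it is invertible, and it is close to `b`. -/

open Polynomial Filter Topology

namespace Polynomial

theorem isUnit_sub_of_eval₂_eq_zero {A B : Type*} [CommRing A] [CommRing B] (f : A →+* B)
    {p : A[X]} {b : B} (hb : p.eval₂ f b = 0) {d : A} (hd : IsUnit (p.eval d)) :
    IsUnit (b - f d) := by
  have hdvd := sub_dvd_eval_sub b (f d) (p.map f)
  rw [eval_map, hb, eval_map, eval₂_at_apply, zero_sub] at hdvd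
  exact isUnit_of_dvd_unit hdvd (hd.map f).neg

variable {A : Type*} [NormedCommRing A]

theorem hasStrictFDerivAt_eval (𝕜 : Type*) [NontriviallyNormedField 𝕜] [NormedAlgebra 𝕜 A]
    (P : A[X]) (x : A) :
    HasStrictFDerivAt (fun y => P.eval y) (ContinuousLinearMap.mul 𝕜 A (P.derivative.eval x)) x := by
  induction P using Polynomial.induction_on' with
  | add p q hp hq =>
    simp only [eval_add, map_add]
    exact hp.fun_add hq
  | monomial n a =>
    simp only [eval_monomial, derivative_monomial]
    refine ((hasStrictFDerivAt_pow (𝕜 := 𝕜) n (x := x)).const_mul a).congr_fderiv ?_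
    ext v
    simp
    ring

variable [CompleteSpace A]

theorem map_eval_nhds_of_isUnit_derivative (𝕜 : Type*) [NontriviallyNormedField 𝕜]
    [NormedAlgebra 𝕜 A] {P : A[X]} {x : A} (hx : IsUnit (P.derivative.eval x)) :
    Filter.map (fun y => P.eval y) (𝓝 x) = 𝓝 (P.eval x) := by
  refine (hasStrictFDerivAt_eval 𝕜 P x).map_nhds_eq_of_surj (LinearMap.range_eq_top.mpr ?_)
  exact fun z => ⟨hx.unit⁻¹ * z, by simp [← mul_assoc]⟩

theorem mem_closure_setOf_isUnit_eval (𝕜 : Type*) [NontriviallyNormedField 𝕜]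
    [NormedAlgebra 𝕜 A] (hA : Dense {a : A | IsUnit a}) {P : A[X]} {x : A}
    (hx : IsUnit (P.derivative.eval x)) : x ∈ closure {y | IsUnit (P.eval y)} := by
  have h := mem_closure_iff_frequently.mp (hA (P.eval x))
  rw [← map_eval_nhds_of_isUnit_derivative 𝕜 hx, frequently_map] at h
  exact mem_closure_iff_frequently.mpr h

theorem dense_setOf_isUnit_eval (𝕜 : Type*) [NontriviallyNormedField 𝕜] [CharZero 𝕜]
    [NormedAlgebra 𝕜 A] (hA : Dense {a : A | IsUnit a}) {P : A[X]}
    (hP : IsUnit P.leadingCoeff) : Dense {x | IsUnit (P.eval x)} := by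
  have : IsAddTorsionFree A := .of_isTorsionFree 𝕜 A
  induction hdeg : P.natDegree generalizing P with
  | zero =>
    have hP0 : IsUnit (P.coeff 0) := by rwa [leadingCoeff, hdeg] at hP
    rw [eq_C_of_natDegree_eq_zero hdeg]
    simp [hP0]
  | succ n ih =>
    have hn : IsUnit ((n + 1 : ℕ) : A) := by
      simpa using ((Nat.cast_ne_zero (R := 𝕜)).mpr n.succ_ne_zero).isUnit.map (algebraMap 𝕜 A)
    have hP' : Dense {x | IsUnit (P.derivative.eval x)} :=
      ih (by rw [leadingCoeff_derivative, hdeg]; exact hP.mul hn) (by simp [hdeg])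
    exact dense_closure.mp (hP'.mono fun _ => mem_closure_setOf_isUnit_eval 𝕜 hA)

end Polynomial

theorem dense_invertibles_of_integral_extension_general
    (A B : Type*) [NormedCommRing A] [NormedAlgebra ℂ A] [CompleteSpace A]
    [NormedCommRing B] [NormedAlgebra ℂ B]
    (f : A →ₐ[ℂ] B) (hcont : Continuous f)
    (hint : ∀ b : B, ∃ p : Polynomial A, p.Monic ∧ Polynomial.eval₂ f.toRingHom b p = 0)
    (hA : Dense {a : A | IsUnit a}) :
    Dense {b : B | IsUnit b} := by
  intro b
  obtain ⟨p, hp, hpb⟩ := hint b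
  have hdense := Polynomial.dense_setOf_isUnit_eval ℂ hA (hp.leadingCoeff ▸ isUnit_one)
  have hb := map_mem_closure (f := fun d => b - f.toRingHom d) (t := {b | IsUnit b})
    (continuous_const.sub hcont) (hdense 0)
    fun d hd => Polynomial.isUnit_sub_of_eval₂_eq_zero f.toRingHom hpb hd
  simpa using hb

/-- **Theorem 2.3.** Let `B` be a commutative unital complex Banach algebra which is an
integral extension of the commutative unital complex Banach algebra `A` (via a continuous
injective unital algebra homomorphism `f : A → B`: every `b ∈ B` is a root of a monic
polynomial with coefficients in `f(A)`).  If `A` has dense invertible group then so has `B`. -/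
theorem dense_invertibles_of_integral_extension
    (A B : Type*) [NormedCommRing A] [NormedAlgebra ℂ A] [CompleteSpace A]
    [NormedCommRing B] [NormedAlgebra ℂ B] [CompleteSpace B]
    (f : A →ₐ[ℂ] B) (hcont : Continuous f) (hinj : Function.Injective f)
    (hint : ∀ b : B, ∃ p : Polynomial A, p.Monic ∧ Polynomial.eval₂ f.toRingHom b p = 0)
    (hA : Dense {a : A | IsUnit a}) :
    Dense {b : B | IsUnit b} :=
  dense_invertibles_of_integral_extension_general A B f hcont hint hA
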